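/- Let G = (V, E, d, w) be a locally finite weighted graph, where d(x,y) denotes the shortest weighted distance. For any two distinct vertices x, y ∈ V, the Ricci curvature satisfies κ(x,y) = inf { ∇_{xy} Δf : f ∈ Lip(1), ∇_{yx} f = 1 }, where ∇_{xy} f = (f(x) − f(y))/d(x,y) and Δf(x) = (1/D_x) Σ_{z∼x} w_{xz}(f(z) − f(x)). -/

import Mathlib

/-!
Write `E_μ f = ∑ μ f`. Since `E_{μ_x^α} f = f x + (1 - α) Δf x`, for `f ∈ Lip(1)` with
`f y - f x = d(x,y)` weak Kantorovich duality `E_{μ_y^α} f - E_{μ_x^α} f ≤ W(μ_x^α, μ_y^α)`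
says exactly `κ_α(x,y)/(1 - α) ≤ ∇_{xy} Δf`; letting `α → 1` gives `κ ≤ ∇_{xy} Δf`.

Conversely, for `α > 1/2` every coupling puts mass at least `2α - 1 > 0` on `(x, y)`. Take an
optimal one: it is cyclically monotone, so the arc costs `d(u, v') - d(u', v')` between pairs
`(u, v), (u', v')` of its support have no negative cycles and admit a potential, whose McShane
extension is a `Lip(1)` function `f` with `f v - f u = d(u,v)` on the support. Then `f` attains
`W`, and `f y - f x = d(x,y)`, so `κ_α(x,y)/(1 - α) = ∇_{xy} Δf` lies in the set.
-/

open Filter Finset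
open scoped Classical

namespace RicciWeighted

variable {V : Type*}

/-- The length of a walk with respect to an edge-length function `d`:
the sum of the lengths of its edges. -/
noncomputable def walkLength (G : SimpleGraph V) (d : V → V → ℝ) {x y : V}
    (p : G.Walk x y) : ℝ :=
  (p.darts.map fun e => d e.toProd.1 e.toProd.2).sum

/-- `d x y` is the shortest weighted path distance between `x` and `y`
(i.e. the greatest lower bound of the lengths of walks joining them). -/
def IsShortestDist (G : SimpleGraph V) (d : V → V → ℝ) : Prop :=
  ∀ x y : V, IsGLB {r : ℝ | ∃ p : G.Walk x y, walkLength G d p = r} (d x y)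

/-- The total weight `D_x = ∑_{y ∼ x} w_{x y}` at a vertex `x`. -/
noncomputable def deg (G : SimpleGraph V) [∀ v : V, Fintype (G.neighborSet v)]
    (w : V → V → ℝ) (x : V) : ℝ :=
  ∑ y ∈ G.neighborFinset x, w x y

/-- The random-walk probability distribution `μ_x^α`. -/
noncomputable def mu (G : SimpleGraph V) [∀ v : V, Fintype (G.neighborSet v)]
    (w : V → V → ℝ) (α : ℝ) (x : V) : V → ℝ :=
  fun z => if z = x then α else if G.Adj x z then (1 - α) * w x z / deg G w x else 0

/-- A coupling between two finitely supported distributions `μ₁` and `μ₂`. -/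
structure IsCoupling (μ₁ μ₂ : V → ℝ) (A : V → V → ℝ) : Prop where
  mem_Icc : ∀ x y : V, A x y ∈ Set.Icc (0 : ℝ) 1
  finite_support : (Function.support fun p : V × V => A p.1 p.2).Finite
  marginal_fst : ∀ x : V, ∑ᶠ y : V, A x y = μ₁ x
  marginal_snd : ∀ y : V, ∑ᶠ x : V, A x y = μ₂ y

/-- The transport cost `∑_{x,y} A(x,y) d(x,y)` of a plan `A`. -/
noncomputable def cost (d : V → V → ℝ) (A : V → V → ℝ) : ℝ :=
  ∑ᶠ p : V × V, A p.1 p.2 * d p.1 p.2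

/-- The Wasserstein transportation distance between `μ₁` and `μ₂`. -/
noncomputable def W (d : V → V → ℝ) (μ₁ μ₂ : V → ℝ) : ℝ :=
  sInf {r : ℝ | ∃ A : V → V → ℝ, IsCoupling μ₁ μ₂ A ∧ cost d A = r}

/-- The `α`-Ricci curvature `κ_α(x,y) = 1 - W(μ_x^α, μ_y^α)/d(x,y)`. -/
noncomputable def kappaAlpha (G : SimpleGraph V) [∀ v : V, Fintype (G.neighborSet v)]
    (d w : V → V → ℝ) (α : ℝ) (x y : V) : ℝ :=
  1 - W d (mu G w α x) (mu G w α y) / d x y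

/-- `k` is the (Lin–Lu–Yau) Ricci curvature of the pair `(x, y)`:
the limit of `κ_α(x,y)/(1-α)` as `α → 1⁻`. -/
def IsRicci (G : SimpleGraph V) [∀ v : V, Fintype (G.neighborSet v)]
    (d w : V → V → ℝ) (x y : V) (k : ℝ) : Prop :=
  Tendsto (fun α : ℝ => kappaAlpha G d w α x y / (1 - α))
    (nhdsWithin 1 (Set.Iio 1)) (nhds k)

/-- A `∗`-coupling between `μ_u` and `μ_v`. -/
structure IsStarCoupling (μu μv : V → ℝ) (u v : V) (B : V → V → ℝ) : Prop where
  pos : 0 < B u v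
  nonpos : ∀ x y : V, (x, y) ≠ (u, v) → B x y ≤ 0
  finite_support : (Function.support fun p : V × V => B p.1 p.2).Finite
  sum_zero : ∑ᶠ p : V × V, B p.1 p.2 = 0
  marginal_fst : ∀ x : V, x ≠ u → ∑ᶠ y : V, B x y = -μu x
  marginal_snd : ∀ y : V, y ≠ v → ∑ᶠ x : V, B x y = -μv y

/-- The `Treelike` property: for every edge `(x,y)` and every `k ∈ N(x)`, `l ∈ N(y)`,
`d(k,l) = d(k,x) + d(x,y) + d(y,l)`. -/
def Treelike (G : SimpleGraph V) (d : V → V → ℝ) : Prop :=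
  ∀ x y : V, G.Adj x y →
    ∀ k : V, (k = x ∨ G.Adj x k) → ∀ l : V, (l = y ∨ G.Adj y l) →
      d k l = d k x + d x y + d y l

/-- `f` is Lip(1) with respect to `d`. -/
def Lip1 (d : V → V → ℝ) (f : V → ℝ) : Prop := ∀ x y : V, f x - f y ≤ d x y

end RicciWeighted

namespace RicciWeighted

/-- The graph Laplacian `Δf(x) = (1/D_x) ∑_{z ∼ x} w_{xz} (f z − f x)`. -/
noncomputable def laplacian {V : Type*} (G : SimpleGraph V)
    [∀ v : V, Fintype (G.neighborSet v)] (w : V → V → ℝ) (f : V → ℝ) (x : V) : ℝ :=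
  (1 / deg G w x) * ∑ z ∈ G.neighborFinset x, w x z * (f z - f x)

end RicciWeighted

namespace RicciWeighted

variable {V : Type*}

section ShortestDist

variable {G : SimpleGraph V} {d : V → V → ℝ}

lemma walkLength_cons {x y z : V} (h : G.Adj x y) (p : G.Walk y z) :
    walkLength G d (.cons h p) = d x y + walkLength G d p := by
  simp [walkLength]

lemma walkLength_append {x y z : V} (p : G.Walk x y) (q : G.Walk y z) :
    walkLength G d (p.append q) = walkLength G d p + walkLength G d q := by
  simp [walkLength]

lemma walkLength_nonneg (hd_pos : ∀ x y : V, G.Adj x y → 0 < d x y) {x y : V}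
    (p : G.Walk x y) : 0 ≤ walkLength G d p := by
  induction p with
  | nil => exact le_rfl
  | cons h p ih => rw [walkLength_cons]; exact add_nonneg (hd_pos _ _ h).le ih

namespace IsShortestDist

lemma le_walkLength (hd : IsShortestDist G d) {x y : V} (p : G.Walk x y) :
    d x y ≤ walkLength G d p :=
  (hd x y).1 ⟨p, rfl⟩

/-- The empty set of walk lengths would have no greatest lower bound in `ℝ`. -/
lemma reachable (hd : IsShortestDist G d) (x y : V) : G.Reachable x y := by
  by_contra h
  have hempty : {r : ℝ | ∃ p : G.Walk x y, walkLength G d p = r} = ∅ :=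
    Set.eq_empty_of_forall_notMem fun _ ⟨p, _⟩ => h ⟨p⟩
  exact not_isTop (d x y) (isGLB_empty_iff.1 (hempty ▸ hd x y))

lemma nonneg (hd : IsShortestDist G d) (hd_pos : ∀ x y : V, G.Adj x y → 0 < d x y)
    (x y : V) : 0 ≤ d x y :=
  (hd x y).2 fun _ ⟨p, hp⟩ => hp ▸ walkLength_nonneg hd_pos p

lemma self_eq_zero (hd : IsShortestDist G d) (hd_pos : ∀ x y : V, G.Adj x y → 0 < d x y)
    (x : V) : d x x = 0 :=
  le_antisymm (hd.le_walkLength (.nil' x)) (hd.nonneg hd_pos x x)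

lemma triangle (hd : IsShortestDist G d) (x y z : V) : d x z ≤ d x y + d y z := by
  have key : ∀ p : G.Walk x y, ∀ q : G.Walk y z, d x z ≤ walkLength G d p + walkLength G d q :=
    fun p q => walkLength_append p q ▸ hd.le_walkLength (p.append q)
  have hq : ∀ q : G.Walk y z, d x z - walkLength G d q ≤ d x y := fun q =>
    (hd x y).2 fun _ ⟨p, hp⟩ => by linarith [key p q]
  have : d x z - d x y ≤ d y z := (hd y z).2 fun _ ⟨q, hq'⟩ => by linarith [hq q]
  linarith

lemma neighborFinset_nonempty [∀ v : V, Fintype (G.neighborSet v)] (hd : IsShortestDist G d)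
    {x y : V} (hxy : x ≠ y) : (G.neighborFinset x).Nonempty := by
  obtain ⟨p⟩ := hd.reachable x y
  cases p with
  | nil => exact absurd rfl hxy
  | cons h _ => exact ⟨_, (G.mem_neighborFinset _ _).2 h⟩

lemma pos_of_ne [∀ v : V, Fintype (G.neighborSet v)] (hd : IsShortestDist G d)
    (hd_pos : ∀ x y : V, G.Adj x y → 0 < d x y) {x y : V} (hxy : x ≠ y) : 0 < d x y := by
  have hne := hd.neighborFinset_nonempty hxy
  refine lt_of_lt_of_le ((Finset.lt_inf'_iff hne).2 fun z hz =>
    hd_pos x z ((G.mem_neighborFinset _ _).1 hz)) ((hd x y).2 ?_)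
  rintro _ ⟨p, rfl⟩
  cases p with
  | nil => exact absurd rfl hxy
  | cons h q =>
    rw [walkLength_cons]
    exact le_add_of_le_of_nonneg (Finset.inf'_le _ ((G.mem_neighborFinset _ _).2 h))
      (walkLength_nonneg hd_pos q)

end IsShortestDist

end ShortestDist

section RandomWalk

variable {G : SimpleGraph V} [∀ v : V, Fintype (G.neighborSet v)] {w : V → V → ℝ}

lemma deg_pos (hw_pos : ∀ x y : V, G.Adj x y → 0 < w x y) {x : V}
    (hx : (G.neighborFinset x).Nonempty) : 0 < deg G w x :=
  Finset.sum_pos (fun z hz => hw_pos x z ((G.mem_neighborFinset _ _).1 hz)) hx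

@[simp] lemma mu_self (α : ℝ) (x : V) : mu G w α x x = α := by simp [mu]

lemma mu_nonneg (hw_pos : ∀ x y : V, G.Adj x y → 0 < w x y) {α : ℝ} (hα0 : 0 ≤ α)
    (hα1 : α ≤ 1) (x z : V) : 0 ≤ mu G w α x z := by
  unfold mu
  split_ifs with _ hxz
  · exact hα0
  · have := deg_pos hw_pos ⟨z, (G.mem_neighborFinset _ _).2 hxz⟩
    have := hw_pos x z hxz
    have : 0 ≤ 1 - α := by linarith
    positivity
  · exact le_rfl

lemma support_mu_subset (α : ℝ) (x : V) :
    Function.support (mu G w α x) ⊆ ↑(insert x (G.neighborFinset x)) := by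
  intro z hz
  by_contra h
  simp only [coe_insert, Set.mem_insert_iff, mem_coe, SimpleGraph.mem_neighborFinset,
    not_or] at h
  simp [mu, h.1, h.2] at hz

lemma sum_mu_mul (hw_pos : ∀ x y : V, G.Adj x y → 0 < w x y) {x : V}
    (hx : (G.neighborFinset x).Nonempty) (α : ℝ) (f : V → ℝ) {U : Finset V}
    (hU : insert x (G.neighborFinset x) ⊆ U) :
    ∑ z ∈ U, mu G w α x z * f z = f x + (1 - α) * laplacian G w f x := by
  have hD := (deg_pos hw_pos hx).ne'
  rw [← Finset.sum_subset hU fun z _ hz => by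
    rw [Function.notMem_support.1 fun h => hz (support_mu_subset α x h), zero_mul]]
  rw [Finset.sum_insert (by simp), mu_self]
  have hnbr : ∀ z ∈ G.neighborFinset x, mu G w α x z * f z
      = (1 - α) / deg G w x * (w x z * (f z - f x)) + (1 - α) / deg G w x * w x z * f x := by
    intro z hz
    have hxz := (G.mem_neighborFinset _ _).1 hz
    simp only [mu, if_neg hxz.ne', if_pos hxz]
    ring
  rw [Finset.sum_congr rfl hnbr, Finset.sum_add_distrib, ← Finset.mul_sum, ← Finset.sum_mul,
    ← Finset.mul_sum, laplacian]
  change _ + (_ + (1 - α) / deg G w x * deg G w x * f x) = _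
  field_simp
  ring

lemma sum_mu (hw_pos : ∀ x y : V, G.Adj x y → 0 < w x y) {x : V}
    (hx : (G.neighborFinset x).Nonempty) (α : ℝ) {U : Finset V}
    (hU : insert x (G.neighborFinset x) ⊆ U) : ∑ z ∈ U, mu G w α x z = 1 := by
  simpa [laplacian] using sum_mu_mul hw_pos hx α (fun _ => 1) hU

end RandomWalk

section Coupling

variable {μ₁ μ₂ : V → ℝ} {A : V → V → ℝ} {U : Finset V}

lemma IsCoupling.nonneg (hA : IsCoupling μ₁ μ₂ A) (u v : V) : 0 ≤ A u v := (hA.mem_Icc u v).1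

lemma IsCoupling.eq_zero_of_left (hA : IsCoupling μ₁ μ₂ A) {u : V} (hu : μ₁ u = 0) (v : V) :
    A u v = 0 := by
  have hfin : (Function.support (A u)).Finite :=
    (hA.finite_support.preimage (Prod.mk_right_injective u).injOn).subset fun _ h => h
  refine le_antisymm ?_ (hA.nonneg u v)
  rw [← hu, ← hA.marginal_fst]
  exact single_le_finsum v hfin (hA.nonneg u)

lemma IsCoupling.eq_zero_of_right (hA : IsCoupling μ₁ μ₂ A) {v : V} (hv : μ₂ v = 0) (u : V) :
    A u v = 0 := by
  have hfin : (Function.support fun u => A u v).Finite :=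
    (hA.finite_support.preimage (Prod.mk_left_injective v).injOn).subset fun _ h => h
  refine le_antisymm ?_ (hA.nonneg u v)
  rw [← hv, ← hA.marginal_snd]
  exact single_le_finsum u hfin (hA.nonneg · v)

lemma isCoupling_iff (h₁ : Function.support μ₁ ⊆ U) (h₂ : Function.support μ₂ ⊆ U) :
    IsCoupling μ₁ μ₂ A ↔ (∀ u v, A u v ∈ Set.Icc (0 : ℝ) 1) ∧
      (∀ u v, A u v ≠ 0 → u ∈ U ∧ v ∈ U) ∧
      (∀ u, ∑ v ∈ U, A u v = μ₁ u) ∧ ∀ v, ∑ u ∈ U, A u v = μ₂ v := by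
  constructor
  · intro hA
    have hsupp : ∀ u v, A u v ≠ 0 → u ∈ U ∧ v ∈ U := fun u v h =>
      ⟨h₁ fun hu => h (hA.eq_zero_of_left hu v), h₂ fun hv => h (hA.eq_zero_of_right hv u)⟩
    refine ⟨hA.mem_Icc, hsupp, fun u => ?_, fun v => ?_⟩
    · rw [← hA.marginal_fst, finsum_eq_sum_of_support_subset _ fun v h => (hsupp u v h).2]
    · rw [← hA.marginal_snd, finsum_eq_sum_of_support_subset _ fun u h => (hsupp u v h).1]
  · rintro ⟨hIcc, hsupp, hrow, hcol⟩
    refine ⟨hIcc, (U ×ˢ U).finite_toSet.subset fun p hp => ?_, fun u => ?_, fun v => ?_⟩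
    · simpa using hsupp p.1 p.2 hp
    · rw [← hrow, finsum_eq_sum_of_support_subset _ fun v h => (hsupp u v h).2]
    · rw [← hcol, finsum_eq_sum_of_support_subset _ fun u h => (hsupp u v h).1]

lemma cost_eq_sum (h₁ : Function.support μ₁ ⊆ U) (h₂ : Function.support μ₂ ⊆ U)
    (hA : IsCoupling μ₁ μ₂ A) (d : V → V → ℝ) :
    cost d A = ∑ p ∈ U ×ˢ U, A p.1 p.2 * d p.1 p.2 := by
  have hsupp := ((isCoupling_iff h₁ h₂).1 hA).2.1
  refine finsum_eq_sum_of_support_subset _ fun p hp => ?_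
  simpa using hsupp p.1 p.2 (left_ne_zero_of_mul hp)

lemma le_one_of_sum_eq_one {μ : V → ℝ} (hμ : ∀ u, 0 ≤ μ u) (hsupp : Function.support μ ⊆ U)
    (hsum : ∑ u ∈ U, μ u = 1) (u : V) : μ u ≤ 1 := by
  by_cases hu : u ∈ U
  · exact hsum ▸ Finset.single_le_sum (fun v _ => hμ v) hu
  · rw [Function.notMem_support.1 fun h => hu (hsupp h)]
    exact zero_le_one

lemma isCoupling_mul (h₁ : Function.support μ₁ ⊆ U) (h₂ : Function.support μ₂ ⊆ U)
    (hμ₁ : ∀ u, 0 ≤ μ₁ u) (hμ₂ : ∀ v, 0 ≤ μ₂ v)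
    (hsum₁ : ∑ u ∈ U, μ₁ u = 1) (hsum₂ : ∑ v ∈ U, μ₂ v = 1) :
    IsCoupling μ₁ μ₂ fun u v => μ₁ u * μ₂ v :=
  (isCoupling_iff h₁ h₂).2 ⟨fun u v => ⟨mul_nonneg (hμ₁ u) (hμ₂ v),
    mul_le_one₀ (le_one_of_sum_eq_one hμ₁ h₁ hsum₁ u) (hμ₂ v)
      (le_one_of_sum_eq_one hμ₂ h₂ hsum₂ v)⟩,
    fun u v h => ⟨h₁ (left_ne_zero_of_mul h), h₂ (right_ne_zero_of_mul h)⟩,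
    fun u => by rw [← Finset.mul_sum, hsum₂, mul_one],
    fun v => by rw [← Finset.sum_mul, hsum₁, one_mul]⟩

end Coupling

section Transport

variable {μ₁ μ₂ : V → ℝ} {A : V → V → ℝ} {U : Finset V}

lemma IsCoupling.sum_mul_sub_sum_mul (h₁ : Function.support μ₁ ⊆ U)
    (h₂ : Function.support μ₂ ⊆ U) (hA : IsCoupling μ₁ μ₂ A) (f : V → ℝ) :
    ∑ v ∈ U, μ₂ v * f v - ∑ u ∈ U, μ₁ u * f u
      = ∑ p ∈ U ×ˢ U, A p.1 p.2 * (f p.2 - f p.1) := by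
  obtain ⟨-, -, hrow, hcol⟩ := (isCoupling_iff h₁ h₂).1 hA
  simp only [mul_sub, Finset.sum_sub_distrib, Finset.sum_product]
  rw [Finset.sum_comm (f := fun u v => A u v * f v)]
  simp only [← Finset.sum_mul, hrow, hcol]

lemma IsCoupling.sum_mul_sub_sum_mul_le_cost (h₁ : Function.support μ₁ ⊆ U)
    (h₂ : Function.support μ₂ ⊆ U) (hA : IsCoupling μ₁ μ₂ A) {d : V → V → ℝ}
    (hd_symm : ∀ u v, d u v = d v u) {f : V → ℝ} (hf : Lip1 d f) :
    ∑ v ∈ U, μ₂ v * f v - ∑ u ∈ U, μ₁ u * f u ≤ cost d A := by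
  rw [hA.sum_mul_sub_sum_mul h₁ h₂, cost_eq_sum h₁ h₂ hA]
  exact Finset.sum_le_sum fun p _ =>
    mul_le_mul_of_nonneg_left (hd_symm p.1 p.2 ▸ hf p.2 p.1) (hA.nonneg p.1 p.2)

lemma sum_mul_sub_sum_mul_le_W (h₁ : Function.support μ₁ ⊆ U)
    (h₂ : Function.support μ₂ ⊆ U) (hA : IsCoupling μ₁ μ₂ A) {d : V → V → ℝ}
    (hd_symm : ∀ u v, d u v = d v u) {f : V → ℝ} (hf : Lip1 d f) :
    ∑ v ∈ U, μ₂ v * f v - ∑ u ∈ U, μ₁ u * f u ≤ W d μ₁ μ₂ :=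
  le_csInf ⟨_, A, hA, rfl⟩ fun _ ⟨_, hB, hBr⟩ =>
    hBr ▸ hB.sum_mul_sub_sum_mul_le_cost h₁ h₂ hd_symm hf

lemma W_eq_of_tight (h₁ : Function.support μ₁ ⊆ U) (h₂ : Function.support μ₂ ⊆ U)
    (hA : IsCoupling μ₁ μ₂ A) {d : V → V → ℝ} (hd_symm : ∀ u v, d u v = d v u) {f : V → ℝ}
    (hf : Lip1 d f) (htight : ∀ u v, 0 < A u v → f v - f u = d u v) :
    W d μ₁ μ₂ = ∑ v ∈ U, μ₂ v * f v - ∑ u ∈ U, μ₁ u * f u := by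
  have hcost : cost d A = ∑ v ∈ U, μ₂ v * f v - ∑ u ∈ U, μ₁ u * f u := by
    rw [hA.sum_mul_sub_sum_mul h₁ h₂, cost_eq_sum h₁ h₂ hA]
    refine Finset.sum_congr rfl fun p _ => ?_
    rcases (hA.nonneg p.1 p.2).eq_or_lt with h | h
    · rw [← h, zero_mul, zero_mul]
    · rw [htight _ _ h]
  rw [← hcost]
  refine le_antisymm (csInf_le ⟨cost d A, ?_⟩ ⟨A, hA, rfl⟩) (le_csInf ⟨_, A, hA, rfl⟩ ?_) <;>
    rintro _ ⟨B, hB, rfl⟩ <;> exact hcost ▸ hB.sum_mul_sub_sum_mul_le_cost h₁ h₂ hd_symm hf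

lemma IsCoupling.add_sub_one_le (h₁ : Function.support μ₁ ⊆ U)
    (h₂ : Function.support μ₂ ⊆ U) (hA : IsCoupling μ₁ μ₂ A) (hsum₂ : ∑ v ∈ U, μ₂ v = 1)
    (u : V) {v : V} (hv : v ∈ U) : μ₁ u + μ₂ v - 1 ≤ A u v := by
  obtain ⟨-, -, hrow, hcol⟩ := (isCoupling_iff h₁ h₂).1 hA
  have hle : ∀ v', A u v' ≤ μ₂ v' := fun v' => by
    by_cases hu : u ∈ U
    · exact hcol v' ▸ Finset.single_le_sum (fun u' _ => hA.nonneg u' v') hu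
    · rw [hA.eq_zero_of_left (Function.notMem_support.1 fun h => hu (h₁ h))]
      exact hcol v' ▸ Finset.sum_nonneg fun u' _ => hA.nonneg u' v'
  have := Finset.sum_le_sum fun v' (_ : v' ∈ U.erase v) => hle v'
  have hrow_u := hrow u
  rw [← Finset.add_sum_erase U _ hv] at hrow_u hsum₂
  linarith

lemma exists_isCoupling_forall_cost_le (h₁ : Function.support μ₁ ⊆ U)
    (h₂ : Function.support μ₂ ⊆ U) (hA : IsCoupling μ₁ μ₂ A) (d : V → V → ℝ) :
    ∃ A₀, IsCoupling μ₁ μ₂ A₀ ∧ ∀ B, IsCoupling μ₁ μ₂ B → cost d A₀ ≤ cost d B := by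
  let K : Set (V × V → ℝ) :=
    (⋂ p, {B | B p ∈ Set.Icc 0 1}) ∩ (⋂ p ∉ U ×ˢ U, {B | B p = 0}) ∩
      ((⋂ u, {B | ∑ v ∈ U, B (u, v) = μ₁ u}) ∩ ⋂ v, {B | ∑ u ∈ U, B (u, v) = μ₂ v})
  have hK : ∀ B : V × V → ℝ, B ∈ K ↔ IsCoupling μ₁ μ₂ fun u v => B (u, v) := by
    intro B
    rw [isCoupling_iff h₁ h₂]
    simp only [K, Set.mem_inter_iff, Set.mem_iInter, Set.mem_ofPred_eq, Prod.forall,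
      Finset.mem_product, ne_eq, and_assoc]
    exact and_congr_right' (and_congr_left' (forall₂_congr fun _ _ => not_imp_comm))
  have hKc : IsCompact K := by
    refine (isCompact_univ_pi fun _ => isCompact_Icc).of_isClosed_subset ?_
      fun B hB p _ => (Set.mem_iInter.1 hB.1.1) p
    refine ((isClosed_iInter fun p => isClosed_Icc.preimage (continuous_apply p)).inter
      (isClosed_biInter fun p _ => isClosed_eq (continuous_apply p) continuous_const)).inter
      ((isClosed_iInter fun u => isClosed_eq ?_ continuous_const).inter
        (isClosed_iInter fun v => isClosed_eq ?_ continuous_const)) <;> fun_prop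
  obtain ⟨B₀, hB₀, hmin⟩ := hKc.exists_isMinOn ⟨_, (hK fun p => A p.1 p.2).2 hA⟩
    (show Continuous fun B : V × V → ℝ => ∑ p ∈ U ×ˢ U, B p * d p.1 p.2 by fun_prop).continuousOn
  have hB₀' := (hK B₀).1 hB₀
  refine ⟨_, hB₀', fun B hB => ?_⟩
  rw [cost_eq_sum h₁ h₂ hB₀', cost_eq_sum h₁ h₂ hB]
  exact hmin ((hK fun p => B p.1 p.2).2 hB)

end Transport

section Transfer

lemma sum_count_mk_right {U : Finset V} {L : List (V × V)} (hL : ∀ q ∈ L, q.2 ∈ U) (u : V) :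
    ∑ v ∈ U, L.count (u, v) = (L.map Prod.fst).count u := by
  induction L with
  | nil => simp
  | cons q L ih =>
    simp only [List.map_cons, List.count_cons]
    rw [Finset.sum_add_distrib, ih fun q' h => hL q' (List.mem_cons_of_mem _ h)]
    obtain ⟨a, b⟩ := q
    have hb : b ∈ U := hL _ List.mem_cons_self
    by_cases h : a = u <;> simp [h, hb]

lemma sum_count_mk_left {U : Finset V} {L : List (V × V)} (hL : ∀ q ∈ L, q.1 ∈ U) (v : V) :
    ∑ u ∈ U, L.count (u, v) = (L.map Prod.snd).count v := by
  induction L with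
  | nil => simp
  | cons q L ih =>
    simp only [List.map_cons, List.count_cons]
    rw [Finset.sum_add_distrib, ih fun q' h => hL q' (List.mem_cons_of_mem _ h)]
    obtain ⟨a, b⟩ := q
    have ha : a ∈ U := hL _ List.mem_cons_self
    by_cases h : b = v <;> simp [h, ha]

lemma sum_count_mul {α : Type*} [BEq α] [LawfulBEq α] {S : Finset α} {L : List α}
    (hL : ∀ q ∈ L, q ∈ S) (g : α → ℝ) : ∑ p ∈ S, (L.count p : ℝ) * g p = (L.map g).sum := by
  induction L with
  | nil => simp
  | cons q L ih =>
    simp only [List.count_cons, Nat.cast_add, add_mul, Finset.sum_add_distrib, List.map_cons,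
      List.sum_cons, ih fun q' h => hL q' (List.mem_cons_of_mem _ h)]
    simp [hL q List.mem_cons_self, add_comm]

noncomputable def transfer (A : V → V → ℝ) (ε : ℝ) (P Q : List (V × V)) : V → V → ℝ :=
  fun u v => A u v + ε * ((Q.count (u, v) : ℝ) - P.count (u, v))

variable {μ₁ μ₂ : V → ℝ} {A : V → V → ℝ} {U : Finset V} {P Q : List (V × V)} {ε : ℝ}

lemma mem_product_of_perm {S : Finset V} (hP : ∀ p ∈ P, p ∈ S ×ˢ S)
    (hfst : (P.map Prod.fst).Perm (Q.map Prod.fst))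
    (hsnd : (P.map Prod.snd).Perm (Q.map Prod.snd)) {q : V × V} (hq : q ∈ Q) : q ∈ S ×ˢ S := by
  obtain ⟨p, hp, hpq⟩ := List.mem_map.1 (hfst.symm.subset (List.mem_map_of_mem hq))
  obtain ⟨p', hp', hpq'⟩ := List.mem_map.1 (hsnd.symm.subset (List.mem_map_of_mem hq))
  exact Finset.mem_product.2
    ⟨hpq ▸ (Finset.mem_product.1 (hP p hp)).1, hpq' ▸ (Finset.mem_product.1 (hP p' hp')).2⟩

lemma transfer_of_notMem {S : Set (V × V)} (hP : ∀ p ∈ P, p ∈ S) (hQ : ∀ q ∈ Q, q ∈ S)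
    {u v : V} (huv : (u, v) ∉ S) : transfer A ε P Q u v = A u v := by
  rw [transfer, List.count_eq_zero_of_not_mem (mt (hQ _) huv),
    List.count_eq_zero_of_not_mem (mt (hP _) huv)]
  simp

lemma sum_transfer_right (hP : ∀ p ∈ P, p.2 ∈ U) (hQ : ∀ q ∈ Q, q.2 ∈ U)
    (hfst : (P.map Prod.fst).Perm (Q.map Prod.fst)) (u : V) :
    ∑ v ∈ U, transfer A ε P Q u v = ∑ v ∈ U, A u v := by
  simp only [transfer, Finset.sum_add_distrib, ← Finset.mul_sum, Finset.sum_sub_distrib]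
  rw [← Nat.cast_sum, ← Nat.cast_sum, sum_count_mk_right hQ, sum_count_mk_right hP,
    hfst.count_eq, sub_self, mul_zero, add_zero]

lemma sum_transfer_left (hP : ∀ p ∈ P, p.1 ∈ U) (hQ : ∀ q ∈ Q, q.1 ∈ U)
    (hsnd : (P.map Prod.snd).Perm (Q.map Prod.snd)) (v : V) :
    ∑ u ∈ U, transfer A ε P Q u v = ∑ u ∈ U, A u v := by
  simp only [transfer, Finset.sum_add_distrib, ← Finset.mul_sum, Finset.sum_sub_distrib]
  rw [← Nat.cast_sum, ← Nat.cast_sum, sum_count_mk_left hQ, sum_count_mk_left hP,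
    hsnd.count_eq, sub_self, mul_zero, add_zero]

lemma transfer_nonneg (hA : ∀ u v, 0 ≤ A u v) (hε : 0 ≤ ε)
    (hεP : ∀ p ∈ P, ε * P.length ≤ A p.1 p.2) (u v : V) : 0 ≤ transfer A ε P Q u v := by
  have hQ : (0 : ℝ) ≤ Q.count (u, v) := Nat.cast_nonneg _
  by_cases huv : (u, v) ∈ P
  · have hPc : (P.count (u, v) : ℝ) ≤ P.length := by exact_mod_cast List.count_le_length
    have := hεP _ huv
    simp only [transfer]
    nlinarith
  · simp only [transfer, List.count_eq_zero_of_not_mem huv, Nat.cast_zero, sub_zero]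
    exact add_nonneg (hA u v) (mul_nonneg hε hQ)

lemma isCoupling_transfer (h₁ : Function.support μ₁ ⊆ U) (h₂ : Function.support μ₂ ⊆ U)
    (hA : IsCoupling μ₁ μ₂ A) (hμ₁ : ∀ u, μ₁ u ≤ 1) (hP : ∀ p ∈ P, p ∈ U ×ˢ U)
    (hfst : (P.map Prod.fst).Perm (Q.map Prod.fst))
    (hsnd : (P.map Prod.snd).Perm (Q.map Prod.snd))
    (hε : 0 ≤ ε) (hεP : ∀ p ∈ P, ε * P.length ≤ A p.1 p.2) :
    IsCoupling μ₁ μ₂ (transfer A ε P Q) := by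
  obtain ⟨-, hsupp, hrow, hcol⟩ := (isCoupling_iff h₁ h₂).1 hA
  have hQ : ∀ q ∈ Q, q ∈ U ×ˢ U := fun _ => mem_product_of_perm hP hfst hsnd
  have hsupp' : ∀ u v, transfer A ε P Q u v ≠ 0 → u ∈ U ∧ v ∈ U := fun u v h => by
    by_contra huv
    rw [transfer_of_notMem (S := ↑(U ×ˢ U)) hP hQ (by simpa using huv)] at h
    exact huv (hsupp u v h)
  have hrow' : ∀ u, ∑ v ∈ U, transfer A ε P Q u v = μ₁ u := fun u =>
    (sum_transfer_right (fun p hp => (mem_product.1 (hP p hp)).2)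
      (fun q hq => (mem_product.1 (hQ q hq)).2) hfst u).trans (hrow u)
  have hcol' : ∀ v, ∑ u ∈ U, transfer A ε P Q u v = μ₂ v := fun v =>
    (sum_transfer_left (fun p hp => (mem_product.1 (hP p hp)).1)
      (fun q hq => (mem_product.1 (hQ q hq)).1) hsnd v).trans (hcol v)
  have hnonneg := transfer_nonneg (Q := Q) hA.nonneg hε hεP
  refine (isCoupling_iff h₁ h₂).2 ⟨fun u v => ⟨hnonneg u v, ?_⟩, hsupp', hrow', hcol'⟩
  by_cases huv : transfer A ε P Q u v = 0
  · rw [huv]; exact zero_le_one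
  · exact (hrow' u ▸ single_le_sum (fun v _ => hnonneg u v) (hsupp' u v huv).2).trans (hμ₁ u)

lemma cost_transfer (h₁ : Function.support μ₁ ⊆ U) (h₂ : Function.support μ₂ ⊆ U)
    (hA : IsCoupling μ₁ μ₂ A) (hA' : IsCoupling μ₁ μ₂ (transfer A ε P Q))
    (hP : ∀ p ∈ P, p ∈ U ×ˢ U) (hQ : ∀ q ∈ Q, q ∈ U ×ˢ U) (d : V → V → ℝ) :
    cost d (transfer A ε P Q) = cost d A +
      ε * ((Q.map fun q => d q.1 q.2).sum - (P.map fun p => d p.1 p.2).sum) := by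
  rw [cost_eq_sum h₁ h₂ hA', cost_eq_sum h₁ h₂ hA, ← sum_count_mul hQ, ← sum_count_mul hP,
    ← Finset.sum_sub_distrib, Finset.mul_sum, ← Finset.sum_add_distrib]
  exact Finset.sum_congr rfl fun p _ => by simp only [transfer, Prod.mk.eta]; ring

/-- For small `ε > 0`, `transfer A ε P Q` is again a coupling, and its cost exceeds that of `A`
by `ε` times the difference of the two sides. -/
lemma IsCoupling.sum_dist_le_of_perm (h₁ : Function.support μ₁ ⊆ U)
    (h₂ : Function.support μ₂ ⊆ U) (hA : IsCoupling μ₁ μ₂ A) (hμ₁ : ∀ u, μ₁ u ≤ 1)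
    {d : V → V → ℝ} (hopt : ∀ B, IsCoupling μ₁ μ₂ B → cost d A ≤ cost d B)
    (hP : ∀ p ∈ P, 0 < A p.1 p.2) (hfst : (P.map Prod.fst).Perm (Q.map Prod.fst))
    (hsnd : (P.map Prod.snd).Perm (Q.map Prod.snd)) :
    (P.map fun p => d p.1 p.2).sum ≤ (Q.map fun q => d q.1 q.2).sum := by
  have hPU : ∀ p ∈ P, p ∈ U ×ˢ U := fun p hp =>
    Finset.mem_product.2 (((isCoupling_iff h₁ h₂).1 hA).2.1 _ _ (hP p hp).ne')
  have hε : ∀ᶠ ε in nhdsWithin (0 : ℝ) (Set.Ioi 0), ∀ p ∈ P, ε * P.length ≤ A p.1 p.2 := by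
    refine (P.finite_toSet.eventually_all).2 fun p hp => nhdsWithin_le_nhds ?_
    have hlim : Filter.Tendsto (fun ε : ℝ => ε * P.length) (nhds 0) (nhds 0) := by
      simpa using (continuous_mul_const (P.length : ℝ)).tendsto 0
    exact hlim.eventually (eventually_le_nhds (hP p hp))
  obtain ⟨ε, hεP, hεpos⟩ := (hε.and self_mem_nhdsWithin).exists
  have hA' := isCoupling_transfer h₁ h₂ hA hμ₁ hPU hfst hsnd hεpos.le hεP
  have hcost := hopt _ hA'
  rw [cost_transfer h₁ h₂ hA hA' hPU (fun _ => mem_product_of_perm hPU hfst hsnd) d,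
    le_add_iff_nonneg_right] at hcost
  exact sub_nonneg.1 (nonneg_of_mul_nonneg_right hcost hεpos)

end Transfer

section Potential

variable {α : Type*}

/-- The cost of the walk `a, l₁, …, lₙ, b` for the arc costs `c`. -/
noncomputable def pathCost (c : α → α → ℝ) (a : α) (l : List α) (b : α) : ℝ :=
  (((a :: l).zip (l ++ [b])).map fun e => c e.1 e.2).sum

lemma pathCost_append_singleton (c : α → α → ℝ) (a : α) (l : List α) (b b' : α) :
    pathCost c a (l ++ [b]) b' = pathCost c a l b + c b b' := by
  rw [pathCost, pathCost, ← List.cons_append,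
    List.zip_append (by simp : (a :: l).length = (l ++ [b]).length)]
  simp

/-- `p b` is the least cost of a walk from a fixed base point to `b`; closed walks bound it
from below. -/
lemma exists_potential (S : Set α) (c : α → α → ℝ)
    (hcyc : ∀ a ∈ S, ∀ l : List α, (∀ z ∈ l, z ∈ S) → 0 ≤ pathCost c a l a) :
    ∃ p : α → ℝ, ∀ a ∈ S, ∀ b ∈ S, p b ≤ p a + c a b := by
  rcases S.eq_empty_or_nonempty with rfl | ⟨s, hs⟩
  · exact ⟨0, by simp⟩
  let R : α → Set ℝ := fun b => {r | ∃ l : List α, (∀ z ∈ l, z ∈ S) ∧ pathCost c s l b = r}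
  have hbdd : ∀ b ∈ S, BddBelow (R b) := by
    intro b hb
    refine ⟨-c b s, ?_⟩
    rintro _ ⟨l, hl, rfl⟩
    have := hcyc s hs (l ++ [b]) (by simpa [or_imp, forall_and] using ⟨hl, hb⟩)
    rw [pathCost_append_singleton] at this
    linarith
  refine ⟨fun b => sInf (R b), fun a ha b hb => ?_⟩
  rw [← sub_le_iff_le_add]
  refine le_csInf ⟨_, [], by simp, rfl⟩ ?_
  rintro _ ⟨l, hl, rfl⟩
  rw [sub_le_iff_le_add, ← pathCost_append_singleton]
  exact csInf_le (hbdd b hb) ⟨l ++ [a], by simpa [or_imp, forall_and] using ⟨hl, ha⟩, rfl⟩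

end Potential

section Duality

variable {d : V → V → ℝ} {μ₁ μ₂ : V → ℝ} {A : V → V → ℝ} {U : Finset V}

/-- Writing `p γ` for `f γ.1`, the Lipschitz bound at `(γ.1, γ'.2)` together with tightness at
`γ'` is the potential inequality `p γ' ≤ p γ + (d γ.1 γ'.2 - d γ'.1 γ'.2)`; a potential is then
extended to all of `V` by the McShane formula. -/
lemma exists_lip1_tight_of_pathCost_nonneg (hd_symm : ∀ u v, d u v = d v u)
    (htri : ∀ u v w, d u w ≤ d u v + d v w) (hd_self : ∀ u, d u u = 0)
    {Γ : Finset (V × V)} (hΓ : Γ.Nonempty)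
    (hcyc : ∀ γ ∈ Γ, ∀ l : List (V × V), (∀ z ∈ l, z ∈ Γ) →
      0 ≤ pathCost (fun γ γ' => d γ.1 γ'.2 - d γ'.1 γ'.2) γ l γ) :
    ∃ f : V → ℝ, Lip1 d f ∧ ∀ γ ∈ Γ, f γ.2 - f γ.1 = d γ.1 γ.2 := by
  obtain ⟨p, hp⟩ := exists_potential (Γ : Set (V × V)) _ hcyc
  let f : V → ℝ := fun z => Γ.inf' hΓ fun γ => p γ + d γ.1 z
  have hf : Lip1 d f := by
    intro a b
    obtain ⟨γ, hγ, hγb⟩ := Γ.exists_mem_eq_inf' hΓ fun γ => p γ + d γ.1 b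
    have := Γ.inf'_le (fun γ => p γ + d γ.1 a) hγ
    have := htri γ.1 b a
    simp only [f, hγb]
    linarith [hd_symm a b]
  refine ⟨f, hf, fun γ hγ => le_antisymm (hd_symm γ.1 γ.2 ▸ hf γ.2 γ.1) ?_⟩
  have hfγ : f γ.1 ≤ p γ := by simpa [hd_self] using Γ.inf'_le (fun γ' => p γ' + d γ'.1 γ.1) hγ
  have : p γ + d γ.1 γ.2 ≤ f γ.2 :=
    (Γ.le_inf'_iff hΓ _).2 fun γ' hγ' => by linarith [hp γ' hγ' γ hγ]
  linarith

/-- Cyclical monotonicity: shifting mass around the cycle `γ = γ₀, γ₁, …, γₙ, γ` of the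
support replaces each pair `(u_{i+1}, v_{i+1})` by `(u_i, v_{i+1})`. -/
lemma IsCoupling.pathCost_nonneg (h₁ : Function.support μ₁ ⊆ U)
    (h₂ : Function.support μ₂ ⊆ U) (hA : IsCoupling μ₁ μ₂ A) (hμ₁ : ∀ u, μ₁ u ≤ 1)
    (hopt : ∀ B, IsCoupling μ₁ μ₂ B → cost d A ≤ cost d B) {γ : V × V}
    (hγ : 0 < A γ.1 γ.2) {l : List (V × V)} (hl : ∀ γ' ∈ l, 0 < A γ'.1 γ'.2) :
    0 ≤ pathCost (fun γ γ' => d γ.1 γ'.2 - d γ'.1 γ'.2) γ l γ := by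
  have hlen : (γ :: l).length = (l ++ [γ]).length := by simp
  let arcs := (γ :: l).zip (l ++ [γ])
  have hfst : arcs.map (fun e => e.1.1) = (γ :: l).map Prod.fst := by
    rw [← List.map_fst_zip hlen.le, List.map_map]; rfl
  have hsnd : arcs.map (fun e => e.2.2) = (l ++ [γ]).map Prod.snd := by
    rw [← List.map_snd_zip hlen.ge, List.map_map]; rfl
  have key := hA.sum_dist_le_of_perm h₁ h₂ hμ₁ hopt (P := l ++ [γ])
    (Q := arcs.map fun e => (e.1.1, e.2.2))
    (fun z hz => (List.mem_append.1 hz).elim (hl z) fun h => List.mem_singleton.1 h ▸ hγ)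
    (by rw [List.map_map]; exact hfst ▸ (List.perm_append_singleton γ l).map Prod.fst)
    (by rw [List.map_map]; exact hsnd ▸ List.Perm.refl _)
  have hP : ((l ++ [γ]).map fun p => d p.1 p.2) = arcs.map fun e => d e.2.1 e.2.2 := by
    rw [← List.map_snd_zip hlen.ge, List.map_map]; rfl
  rw [List.map_map, hP] at key
  have hsplit : pathCost (fun γ γ' => d γ.1 γ'.2 - d γ'.1 γ'.2) γ l γ
      + (arcs.map fun e => d e.2.1 e.2.2).sum = (arcs.map fun e => d e.1.1 e.2.2).sum := by
    rw [pathCost, ← List.sum_map_add]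
    simp [arcs]
  exact (sub_nonneg.2 key).trans_eq (eq_sub_of_add_eq hsplit).symm

lemma IsCoupling.exists_lip1_tight (h₁ : Function.support μ₁ ⊆ U)
    (h₂ : Function.support μ₂ ⊆ U) (hA : IsCoupling μ₁ μ₂ A) (hμ₁ : ∀ u, μ₁ u ≤ 1)
    (hd_symm : ∀ u v, d u v = d v u) (htri : ∀ u v w, d u w ≤ d u v + d v w)
    (hd_self : ∀ u, d u u = 0) (hopt : ∀ B, IsCoupling μ₁ μ₂ B → cost d A ≤ cost d B)
    {u₀ v₀ : V} (h₀ : 0 < A u₀ v₀) :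
    ∃ f : V → ℝ, Lip1 d f ∧ ∀ u v, 0 < A u v → f v - f u = d u v := by
  let Γ := (U ×ˢ U).filter fun γ => 0 < A γ.1 γ.2
  have hΓ : ∀ γ, γ ∈ Γ ↔ 0 < A γ.1 γ.2 := fun γ =>
    ⟨fun h => (Finset.mem_filter.1 h).2, fun h => Finset.mem_filter.2
      ⟨Finset.mem_product.2 (((isCoupling_iff h₁ h₂).1 hA).2.1 _ _ h.ne'), h⟩⟩
  obtain ⟨f, hf, htight⟩ := exists_lip1_tight_of_pathCost_nonneg hd_symm htri hd_self
    ⟨(u₀, v₀), (hΓ _).2 h₀⟩ fun γ hγ l hl =>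
      hA.pathCost_nonneg h₁ h₂ hμ₁ hopt ((hΓ γ).1 hγ) fun γ' h => (hΓ γ').1 (hl γ' h)
  exact ⟨f, hf, fun u v h => htight (u, v) ((hΓ _).2 h)⟩

end Duality

section Curvature

variable {G : SimpleGraph V} [∀ v : V, Fintype (G.neighborSet v)] {d w : V → V → ℝ}

lemma kappaAlpha_div_one_sub {α : ℝ} (hα : α < 1) {x y : V} (hdxy : 0 < d x y) :
    kappaAlpha G d w α x y / (1 - α)
      = (d x y - W d (mu G w α x) (mu G w α y)) / ((1 - α) * d x y) := by
  have : 1 - α ≠ 0 := by linarith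
  rw [kappaAlpha]
  field_simp

lemma sum_mu_mul_sub_sum_mu_mul (hw_pos : ∀ x y : V, G.Adj x y → 0 < w x y) {x y : V}
    (hx : (G.neighborFinset x).Nonempty) (hy : (G.neighborFinset y).Nonempty) (α : ℝ)
    (f : V → ℝ) {U : Finset V} (hUx : insert x (G.neighborFinset x) ⊆ U)
    (hUy : insert y (G.neighborFinset y) ⊆ U) :
    ∑ v ∈ U, mu G w α y v * f v - ∑ u ∈ U, mu G w α x u * f u
      = f y - f x + (1 - α) * (laplacian G w f y - laplacian G w f x) := by
  rw [sum_mu_mul hw_pos hy α f hUy, sum_mu_mul hw_pos hx α f hUx]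
  ring

lemma isCoupling_mu_mul (hw_pos : ∀ x y : V, G.Adj x y → 0 < w x y) {x y : V}
    (hx : (G.neighborFinset x).Nonempty) (hy : (G.neighborFinset y).Nonempty) {α : ℝ}
    (hα0 : 0 ≤ α) (hα1 : α ≤ 1) {U : Finset V} (hUx : insert x (G.neighborFinset x) ⊆ U)
    (hUy : insert y (G.neighborFinset y) ⊆ U) :
    IsCoupling (mu G w α x) (mu G w α y) fun u v => mu G w α x u * mu G w α y v :=
  isCoupling_mul ((support_mu_subset α x).trans (coe_subset.2 hUx))
    ((support_mu_subset α y).trans (coe_subset.2 hUy))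
    (mu_nonneg hw_pos hα0 hα1 x) (mu_nonneg hw_pos hα0 hα1 y)
    (sum_mu hw_pos hx α hUx) (sum_mu hw_pos hy α hUy)

lemma kappaAlpha_div_one_sub_le (hd : IsShortestDist G d)
    (hd_pos : ∀ x y : V, G.Adj x y → 0 < d x y) (hd_symm : ∀ x y : V, d x y = d y x)
    (hw_pos : ∀ x y : V, G.Adj x y → 0 < w x y) {x y : V} (hxy : x ≠ y) {α : ℝ}
    (hα0 : 0 ≤ α) (hα1 : α < 1) {f : V → ℝ} (hf : Lip1 d f) (hfxy : f y - f x = d x y) :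
    kappaAlpha G d w α x y / (1 - α) ≤ (laplacian G w f x - laplacian G w f y) / d x y := by
  have hx := hd.neighborFinset_nonempty hxy
  have hy := hd.neighborFinset_nonempty hxy.symm
  have hdxy := hd.pos_of_ne hd_pos hxy
  set U := insert x (G.neighborFinset x) ∪ insert y (G.neighborFinset y)
  have hUx : insert x (G.neighborFinset x) ⊆ U := subset_union_left
  have hUy : insert y (G.neighborFinset y) ⊆ U := subset_union_right
  have hW := sum_mul_sub_sum_mul_le_W ((support_mu_subset α x).trans (coe_subset.2 hUx))
    ((support_mu_subset α y).trans (coe_subset.2 hUy))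
    (isCoupling_mu_mul hw_pos hx hy hα0 hα1.le hUx hUy) hd_symm hf
  rw [sum_mu_mul_sub_sum_mu_mul hw_pos hx hy α f hUx hUy, hfxy] at hW
  rw [kappaAlpha_div_one_sub hα1 hdxy, div_le_div_iff₀ (by nlinarith) hdxy]
  nlinarith

lemma exists_lip1_kappaAlpha_div_one_sub_eq (hd : IsShortestDist G d)
    (hd_pos : ∀ x y : V, G.Adj x y → 0 < d x y) (hd_symm : ∀ x y : V, d x y = d y x)
    (hw_pos : ∀ x y : V, G.Adj x y → 0 < w x y) {x y : V} (hxy : x ≠ y) {α : ℝ}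
    (hα0 : 1 / 2 < α) (hα1 : α < 1) :
    ∃ f : V → ℝ, Lip1 d f ∧ f y - f x = d x y ∧
      kappaAlpha G d w α x y / (1 - α) = (laplacian G w f x - laplacian G w f y) / d x y := by
  have hx := hd.neighborFinset_nonempty hxy
  have hy := hd.neighborFinset_nonempty hxy.symm
  have hdxy := hd.pos_of_ne hd_pos hxy
  set U := insert x (G.neighborFinset x) ∪ insert y (G.neighborFinset y)
  have hUx : insert x (G.neighborFinset x) ⊆ U := subset_union_left
  have hUy : insert y (G.neighborFinset y) ⊆ U := subset_union_right
  have h₁ := (support_mu_subset (w := w) α x).trans (coe_subset.2 hUx)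
  have h₂ := (support_mu_subset (w := w) α y).trans (coe_subset.2 hUy)
  obtain ⟨A, hA, hopt⟩ := exists_isCoupling_forall_cost_le h₁ h₂
    (isCoupling_mu_mul hw_pos hx hy (by linarith) hα1.le hUx hUy) d
  have hAxy : 0 < A x y := by
    have := hA.add_sub_one_le h₁ h₂ (sum_mu hw_pos hy α hUy) x (hUy (mem_insert_self y _))
    rw [mu_self, mu_self] at this
    linarith
  obtain ⟨f, hf, htight⟩ := hA.exists_lip1_tight h₁ h₂
    (le_one_of_sum_eq_one (mu_nonneg hw_pos (by linarith) hα1.le x) h₁ (sum_mu hw_pos hx α hUx))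
    hd_symm hd.triangle (hd.self_eq_zero hd_pos) hopt hAxy
  refine ⟨f, hf, htight x y hAxy, ?_⟩
  have : 1 - α ≠ 0 := by linarith
  rw [kappaAlpha_div_one_sub hα1 hdxy, W_eq_of_tight h₁ h₂ hA hd_symm hf htight,
    sum_mu_mul_sub_sum_mu_mul hw_pos hx hy α f hUx hUy, htight x y hAxy]
  field_simp
  ring

end Curvature

end RicciWeighted

open RicciWeighted in
/-- **Curvature via the Laplacian.** For a locally finite weighted graph
`G = (V,E,d,w)` and distinct vertices `x, y`, the Ricci curvature satisfies
`κ(x,y) = inf { ∇_{xy} Δf : f ∈ Lip(1), ∇_{yx} f = 1 }`,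
where `∇_{xy} f = (f x − f y)/d(x,y)`. -/
theorem curvature_eq_inf_laplacian
    {V : Type*} (G : SimpleGraph V) [∀ v : V, Fintype (G.neighborSet v)]
    (hconn : G.Connected)
    (d w : V → V → ℝ)
    (hd_symm : ∀ x y : V, d x y = d y x)
    (hd_pos : ∀ x y : V, G.Adj x y → 0 < d x y)
    (hshort : IsShortestDist G d)
    (hw_symm : ∀ x y : V, w x y = w y x)
    (hw_pos : ∀ x y : V, G.Adj x y → 0 < w x y)
    (x y : V) (hxy : x ≠ y)
    (k : ℝ) (hk : IsRicci G d w x y k) :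
    IsGLB {r : ℝ | ∃ f : V → ℝ, Lip1 d f ∧ (f y - f x) / d y x = 1 ∧
        (laplacian G w f x - laplacian G w f y) / d x y = r}
      k := by
  have hdyx : d y x ≠ 0 := (hshort.pos_of_ne hd_pos hxy.symm).ne'
  refine ⟨?_, fun b hb => ?_⟩
  · rintro _ ⟨f, hf, hfyx, rfl⟩
    have hfxy : f y - f x = d x y := hd_symm x y ▸ (div_eq_one_iff_eq hdyx).1 hfyx
    exact le_of_tendsto hk <| eventually_of_mem (Ioo_mem_nhdsLT zero_lt_one) fun α hα =>
      kappaAlpha_div_one_sub_le hshort hd_pos hd_symm hw_pos hxy hα.1.le hα.2 hf hfxy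
  · refine ge_of_tendsto hk <| eventually_of_mem (Ioo_mem_nhdsLT one_half_lt_one) fun α hα => ?_
    obtain ⟨f, hf, hfxy, heq⟩ :=
      exists_lip1_kappaAlpha_div_one_sub_eq hshort hd_pos hd_symm hw_pos hxy hα.1 hα.2
    exact heq ▸ hb ⟨f, hf, by rw [hfxy, hd_symm, div_self hdyx], rfl⟩
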